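/- Let X be a 2-dimensional real Banach space that is both strictly convex and smooth. Then Π₂(X, X) is strictly convex. Equivalently, for every 1-dimensional subspace E ⊆ X and every operator t : E → X, the extension T : X → X with π₂(T) = π₂(t) is unique. -/

import Mathlib

open scoped BigOperators

set_option maxHeartbeats 1000000

/-- The 2-summing norm of a continuous linear operator between real normed spaces. -/
noncomputable def pi2 {X Y : Type*} [NormedAddCommGroup X] [NormedSpace ℝ X]
    [NormedAddCommGroup Y] [NormedSpace ℝ Y] (T : X →L[ℝ] Y) : ℝ :=
  sSup { r : ℝ | ∃ (m : ℕ) (x : Fin m → X),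
    (∀ f : X →L[ℝ] ℝ, ∑ i, (f (x i)) ^ 2 ≤ ‖f‖ ^ 2) ∧
    r = Real.sqrt (∑ i, ‖T (x i)‖ ^ 2) }

namespace Pi2Aux

variable {X : Type*} [NormedAddCommGroup X] [NormedSpace ℝ X]

def p2Set (T : X →L[ℝ] X) : Set ℝ :=
  { r : ℝ | ∃ (m : ℕ) (x : Fin m → X),
    (∀ f : X →L[ℝ] ℝ, ∑ i, (f (x i)) ^ 2 ≤ ‖f‖ ^ 2) ∧
    r = Real.sqrt (∑ i, ‖T (x i)‖ ^ 2) }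

lemma pi2_eq (T : X →L[ℝ] X) : pi2 T = sSup (p2Set T) := rfl

lemma zero_mem_p2Set (T : X →L[ℝ] X) : (0 : ℝ) ∈ p2Set T := by
  refine ⟨0, fun _ => 0, by simp, by simp⟩

lemma p2Set_bddAbove [FiniteDimensional ℝ X] (T : X →L[ℝ] X) : BddAbove (p2Set T) := by
  classical
  set b := Module.finBasis ℝ X with hb
  set g : Fin (Module.finrank ℝ X) → (X →L[ℝ] ℝ) :=
    fun j => LinearMap.toContinuousLinearMap (b.coord j) with hg
  set C1 : ℝ := ∑ j, ‖T (b j)‖ ^ 2 with hC1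
  set C2 : ℝ := ∑ j, ‖g j‖ ^ 2 with hC2
  refine ⟨Real.sqrt (C1 * C2), ?_⟩
  rintro r ⟨m, x, hx, rfl⟩
  refine Real.sqrt_le_sqrt ?_
  have key : ∀ i, ‖T (x i)‖ ^ 2 ≤ C1 * ∑ j, (g j (x i)) ^ 2 := by
    intro i
    have hxi : x i = ∑ j, g j (x i) • b j := by
      simpa [hg] using (b.sum_repr (x i)).symm
    have h1 : ‖T (x i)‖ ≤ ∑ j, |g j (x i)| * ‖T (b j)‖ := by
      have hTxi : T (x i) = ∑ j, g j (x i) • T (b j) := by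
        conv_lhs => rw [hxi]
        rw [map_sum]
        exact Finset.sum_congr rfl fun j _ => by rw [map_smul]
      rw [hTxi]
      refine (norm_sum_le _ _).trans (le_of_eq ?_)
      exact Finset.sum_congr rfl fun j _ => by rw [norm_smul, Real.norm_eq_abs]
    have h2 : (∑ j, |g j (x i)| * ‖T (b j)‖) ^ 2 ≤
        (∑ j, (g j (x i)) ^ 2) * C1 := by
      have := Finset.sum_mul_sq_le_sq_mul_sq Finset.univ
        (fun j => |g j (x i)|) (fun j => ‖T (b j)‖)
      simpa [sq_abs, hC1] using this
    calc ‖T (x i)‖ ^ 2 ≤ (∑ j, |g j (x i)| * ‖T (b j)‖) ^ 2 := by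
          apply pow_le_pow_left₀ (norm_nonneg _) h1
      _ ≤ (∑ j, (g j (x i)) ^ 2) * C1 := h2
      _ = C1 * ∑ j, (g j (x i)) ^ 2 := by ring
  calc ∑ i, ‖T (x i)‖ ^ 2 ≤ ∑ i, C1 * ∑ j, (g j (x i)) ^ 2 :=
        Finset.sum_le_sum fun i _ => key i
    _ = C1 * ∑ j, ∑ i, (g j (x i)) ^ 2 := by
        rw [← Finset.mul_sum]; rw [Finset.sum_comm]
    _ ≤ C1 * C2 := by
        have hC1nn : 0 ≤ C1 := Finset.sum_nonneg fun j _ => sq_nonneg _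
        refine mul_le_mul_of_nonneg_left ?_ hC1nn
        exact Finset.sum_le_sum fun j _ => hx (g j)

lemma pi2_nonneg [FiniteDimensional ℝ X] (T : X →L[ℝ] X) : 0 ≤ pi2 T :=
  le_csSup (p2Set_bddAbove T) (zero_mem_p2Set T)

lemma norm_apply_le_pi2 [FiniteDimensional ℝ X] (T : X →L[ℝ] X) {y : X} (hy : ‖y‖ ≤ 1) :
    ‖T y‖ ≤ pi2 T := by
  have hmem : ‖T y‖ ∈ p2Set T := by
    refine ⟨1, fun _ => y, ?_, ?_⟩
    · intro f
      have h1 : |f y| ≤ ‖f‖ := by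
        calc |f y| = ‖f y‖ := (Real.norm_eq_abs _).symm
          _ ≤ ‖f‖ * ‖y‖ := f.le_opNorm y
          _ ≤ ‖f‖ := by
              have := mul_le_mul_of_nonneg_left hy (norm_nonneg f)
              simpa using this
      calc ∑ _i : Fin 1, (f y) ^ 2 = (f y) ^ 2 := by simp
        _ = |f y| ^ 2 := (sq_abs _).symm
        _ ≤ ‖f‖ ^ 2 := pow_le_pow_left₀ (abs_nonneg _) h1 2
    · rw [Fin.sum_univ_one, Real.sqrt_sq (norm_nonneg _)]
  exact le_csSup (p2Set_bddAbove T) hmem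

variable {X : Type*} [NormedAddCommGroup X] [NormedSpace ℝ X]

abbrev Vsp (X : Type*) [NormedAddCommGroup X] [NormedSpace ℝ X] : Type _ :=
  (((X →L[ℝ] ℝ) →ₗ[ℝ] (X →L[ℝ] ℝ) →ₗ[ℝ] ℝ) × ℝ)

noncomputable abbrev NN (X : Type*) [NormedAddCommGroup X] [NormedSpace ℝ X] : ℕ :=
  Module.finrank ℝ (Vsp X) + 1

def evalL (y : X) : (X →L[ℝ] ℝ) →ₗ[ℝ] ℝ where
  toFun f := f y
  map_add' f g := rfl
  map_smul' c f := rfl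

noncomputable def Phi (R : X →L[ℝ] X) (y : X) : Vsp X :=
  ((evalL y).smulRight (evalL y), ‖R y‖ ^ 2)

@[simp] lemma Phi_fst_apply (R : X →L[ℝ] X) (y : X) (f g : X →L[ℝ] ℝ) :
    (Phi R y).1 f g = f y * g y := by
  simp [Phi, evalL, LinearMap.smulRight_apply, smul_eq_mul]

@[simp] lemma Phi_snd (R : X →L[ℝ] X) (y : X) : (Phi R y).2 = ‖R y‖ ^ 2 := rfl

lemma Phi_zero (R : X →L[ℝ] X) : Phi R 0 = 0 := by
  refine Prod.ext ?_ ?_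
  · refine LinearMap.ext fun f => LinearMap.ext fun g => ?_
    simp [Phi, evalL, LinearMap.smulRight_apply]
  · simp [Phi]

lemma Phi_smul (R : X →L[ℝ] X) (c : ℝ) (y : X) :
    Phi R (c • y) = (c ^ 2) • Phi R y := by
  refine Prod.ext ?_ ?_
  · refine LinearMap.ext fun f => LinearMap.ext fun g => ?_
    simp only [Phi, Prod.smul_fst, LinearMap.smul_apply, smul_eq_mul,
      LinearMap.smulRight_apply, evalL, LinearMap.coe_mk, AddHom.coe_mk, map_smul]
    ring
  · simp only [Phi, Prod.smul_snd, smul_eq_mul, map_smul, norm_smul, Real.norm_eq_abs,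
      mul_pow, sq_abs]

lemma sum_Phi_fst (R : X →L[ℝ] X) {m : ℕ} (x : Fin m → X) (f : X →L[ℝ] ℝ) :
    (∑ i, Phi R (x i)).1 f f = ∑ i, (f (x i)) ^ 2 := by
  rw [Prod.fst_sum]
  rw [LinearMap.coe_sum]
  simp only [Finset.sum_apply]
  rw [LinearMap.coe_sum]
  simp only [Finset.sum_apply]
  exact Finset.sum_congr rfl fun i _ => by rw [Phi_fst_apply, sq]

lemma sum_Phi_snd (R : X →L[ℝ] X) {m : ℕ} (x : Fin m → X) :
    (∑ i, Phi R (x i)).2 = ∑ i, ‖R (x i)‖ ^ 2 := by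
  rw [Prod.snd_sum]
  exact Finset.sum_congr rfl fun i _ => rfl

lemma caratheodory_reduce [FiniteDimensional ℝ X] (R : X →L[ℝ] X) (m : ℕ) (x : Fin m → X) :
    ∃ z : Fin (NN X) → X, ∑ j, Phi R (z j) = ∑ i, Phi R (x i) := by
  classical
  rcases Nat.eq_zero_or_pos m with hm | hm
  · refine ⟨fun _ => 0, ?_⟩
    subst hm
    simp [Phi_zero]
  have hmR : (0 : ℝ) < (m : ℝ) := by exact_mod_cast hm
  set K : Set (Vsp X) := Set.range (Phi R) with hK
  set P : Vsp X := ∑ i, Phi R (x i) with hP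
  have hQ : (m : ℝ)⁻¹ • P ∈ convexHull ℝ K := by
    have hcm := Finset.centerMass_mem_convexHull (Finset.univ : Finset (Fin m))
      (w := fun _ => (1 : ℝ)) (z := fun i => Phi R (x i)) (fun _ _ => zero_le_one)
      (by simp [hmR])
      (fun i _ => (Set.mem_range_self (f := Phi R) (x i) : Phi R (x i) ∈ K))
    simpa [Finset.centerMass, hP] using hcm
  obtain ⟨ι, hι, z0, w, hrange, hai, hwpos, hw1, hsum⟩ :=
    eq_pos_convex_span_of_mem_convexHull (𝕜 := ℝ) (s := K) (x := (m : ℝ)⁻¹ • P) (by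
      have hcm := Finset.centerMass_mem_convexHull (Finset.univ : Finset (Fin m))
        (w := fun _ => (1 : ℝ)) (z := fun i => Phi R (x i)) (fun _ _ => zero_le_one)
        (by simp [hmR])
        (fun i _ => (Set.mem_range_self (f := Phi R) (x i) : Phi R (x i) ∈ K))
      simpa [Finset.centerMass, hP] using hcm)
  letI := hι
  have hcard : Fintype.card ι ≤ NN X := by
    refine hai.card_le_finrank_succ.trans ?_
    exact Nat.succ_le_succ (Submodule.finrank_le _)
  choose y hy using fun i => hrange (Set.mem_range_self (f := z0) i)
  have hPsum : P = ∑ i : ι, ((m : ℝ) * w i) • z0 i := by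
    have h1 : (m : ℝ) • ((m : ℝ)⁻¹ • P) = P := smul_inv_smul₀ (ne_of_gt hmR) P
    rw [← h1, ← hsum, Finset.smul_sum]
    exact Finset.sum_congr rfl fun i _ => by rw [smul_smul]
  set c : ι → ℝ := fun i => Real.sqrt ((m : ℝ) * w i) with hc
  have hterm : ∀ i : ι, Phi R (c i • y i) = ((m : ℝ) * w i) • z0 i := by
    intro i
    rw [Phi_smul, hy i, hc, Real.sq_sqrt (mul_nonneg hmR.le (hwpos i).le)]
  set n := Fintype.card ι with hn
  set e : ι ≃ Fin n := Fintype.equivFin ι with he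
  set F : ι → Vsp X := fun i => ((m : ℝ) * w i) • z0 i with hF
  set g : ℕ → Vsp X := fun k => if h : k < n then F (e.symm ⟨k, h⟩) else 0 with hgdef
  refine ⟨fun j => if h : (j : ℕ) < n then c (e.symm ⟨j, h⟩) • y (e.symm ⟨j, h⟩) else 0, ?_⟩
  have hPhig : ∀ j : Fin (NN X),
      Phi R (if h : (j : ℕ) < n then c (e.symm ⟨j, h⟩) • y (e.symm ⟨j, h⟩) else 0) = g (j : ℕ) := by
    intro j
    by_cases h : (j : ℕ) < n
    · rw [dif_pos h, hterm, hgdef]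
      simp only [dif_pos h, hF]
    · rw [dif_neg h, Phi_zero, hgdef]
      simp only [dif_neg h]
  calc ∑ j : Fin (NN X), Phi R _ = ∑ j : Fin (NN X), g (j : ℕ) :=
        Finset.sum_congr rfl fun j _ => hPhig j
    _ = ∑ k ∈ Finset.range (NN X), g k := Fin.sum_univ_eq_sum_range g (NN X)
    _ = ∑ k ∈ Finset.range n, g k := by
        refine (Finset.sum_subset (Finset.range_subset_range.2 hcard) ?_).symm
        intro k _ hk
        rw [hgdef]
        simp only [Finset.mem_range] at hk
        exact dif_neg hk
    _ = ∑ j : Fin n, g (j : ℕ) := (Fin.sum_univ_eq_sum_range g n).symm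
    _ = ∑ j : Fin n, F (e.symm j) := by
        refine Finset.sum_congr rfl fun j _ => ?_
        rw [hgdef]
        simp only [dif_pos j.isLt, Fin.eta]
    _ = ∑ i : ι, F i := Equiv.sum_comp e.symm F
    _ = P := hPsum.symm

lemma pi2_attained [FiniteDimensional ℝ X] (R : X →L[ℝ] X) :
    ∃ x : Fin (NN X) → X,
      (∀ f : X →L[ℝ] ℝ, ∑ i, (f (x i)) ^ 2 ≤ ‖f‖ ^ 2) ∧
      Real.sqrt (∑ i, ‖R (x i)‖ ^ 2) = pi2 R := by
  classical
  set A : Set (Fin (NN X) → X) :=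
    {x | ∀ f : X →L[ℝ] ℝ, ∑ i, (f (x i)) ^ 2 ≤ ‖f‖ ^ 2} with hA
  have hA0 : (fun _ => (0 : X)) ∈ A := by
    intro f
    simp [sq_nonneg]
  have hAclosed : IsClosed A := by
    have : A = ⋂ f : X →L[ℝ] ℝ, {x : Fin (NN X) → X | ∑ i, (f (x i)) ^ 2 ≤ ‖f‖ ^ 2} := by
      ext x; simp [hA]
    rw [this]
    refine isClosed_iInter fun f => isClosed_le ?_ continuous_const
    exact continuous_finset_sum _ fun i _ =>
      ((f.continuous.comp (continuous_apply i)).pow 2)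
  have hAsub : A ⊆ Metric.closedBall 0 1 := by
    intro x hx
    have hx' : ∀ f : X →L[ℝ] ℝ, ∑ i, (f (x i)) ^ 2 ≤ ‖f‖ ^ 2 := hx
    rw [Metric.mem_closedBall, dist_zero_right]
    rw [pi_norm_le_iff_of_nonneg zero_le_one]
    intro i
    refine NormedSpace.norm_le_dual_bound ℝ (x i) zero_le_one ?_
    intro f
    have h1 : (f (x i)) ^ 2 ≤ ‖f‖ ^ 2 := by
      refine le_trans ?_ (hx' f)
      exact Finset.single_le_sum (f := fun j => (f (x j)) ^ 2)
        (fun j _ => sq_nonneg _) (Finset.mem_univ i)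
    have h2 : |f (x i)| ≤ ‖f‖ := by
      have := Real.sqrt_le_sqrt h1
      rwa [Real.sqrt_sq_eq_abs, Real.sqrt_sq (norm_nonneg f)] at this
    simpa [Real.norm_eq_abs, one_mul] using h2
  have hAcompact : IsCompact A :=
    IsCompact.of_isClosed_subset (isCompact_closedBall 0 1) hAclosed hAsub
  have hVcont : Continuous fun x : Fin (NN X) → X => Real.sqrt (∑ i, ‖R (x i)‖ ^ 2) := by
    refine Real.continuous_sqrt.comp ?_
    exact continuous_finset_sum _ fun i _ =>
      ((R.continuous.comp (continuous_apply i)).norm.pow 2)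
  obtain ⟨x₀, hx₀A, hmax⟩ :=
    hAcompact.exists_isMaxOn ⟨(fun _ => 0), hA0⟩ hVcont.continuousOn
  refine ⟨x₀, hx₀A, le_antisymm ?_ ?_⟩
  · exact le_csSup (p2Set_bddAbove R) ⟨NN X, x₀, hx₀A, rfl⟩
  · rw [pi2_eq]
    refine csSup_le ⟨0, zero_mem_p2Set R⟩ ?_
    rintro r ⟨m, xx, hxx, rfl⟩
    obtain ⟨z, hz⟩ := caratheodory_reduce R m xx
    have hzA : z ∈ A := by
      intro f
      have h1 : (∑ j, Phi R (z j)).1 f f = (∑ i, Phi R (xx i)).1 f f := by rw [hz]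
      rw [sum_Phi_fst, sum_Phi_fst] at h1
      rw [h1]
      exact hxx f
    have h2 : ∑ j, ‖R (z j)‖ ^ 2 = ∑ i, ‖R (xx i)‖ ^ 2 := by
      have := congrArg Prod.snd hz
      rwa [sum_Phi_snd, sum_Phi_snd] at this
    rw [← h2]
    exact hmax hzA

lemma key_rank_one [FiniteDimensional ℝ X] (S : X →L[ℝ] X) {u : X} (hu : ‖u‖ = 1)
    {f₀ : X →L[ℝ] ℝ} (hf₀ : ‖f₀‖ = 1) (hf₀u : f₀ u = 1)
    (huniq : ∀ f : X →L[ℝ] ℝ, ‖f‖ = 1 → f u = 1 → f = f₀)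
    (hSu : ‖S u‖ = pi2 S) (hpos : 0 < pi2 S)
    {v : X} (hv : f₀ v = 0) : S v = 0 := by
  classical
  by_contra hSv
  have hSvn : (0 : ℝ) < ‖S v‖ := norm_pos_iff.2 hSv
  set a : ℝ := pi2 S with ha
  set s : ℝ := ‖S v‖ ^ 2 / (2 * a ^ 2) with hs
  have hspos : 0 < s := by positivity
  set G : (X →L[ℝ] ℝ) → ℝ := fun f => ‖f‖ ^ 2 - (f u) ^ 2 with hG
  set H : (X →L[ℝ] ℝ) → ℝ := fun f => (f v) ^ 2 - s * (f u) ^ 2 with hH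
  have hGc : Continuous G :=
    (continuous_norm.pow 2).sub (((ContinuousLinearMap.apply ℝ ℝ u).continuous).pow 2)
  have hHc : Continuous H :=
    (((ContinuousLinearMap.apply ℝ ℝ v).continuous).pow 2).sub
      (continuous_const.mul (((ContinuousLinearMap.apply ℝ ℝ u).continuous).pow 2))
  have hf₀mem : f₀ ∈ Metric.sphere (0 : X →L[ℝ] ℝ) 1 :=
    mem_sphere_zero_iff_norm.2 hf₀
  -- G is nonnegative on the sphere
  have hGnn : ∀ f : X →L[ℝ] ℝ, ‖f‖ = 1 → 0 ≤ G f := by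
    intro f hf
    have h1 : |f u| ≤ 1 := by
      calc |f u| = ‖f u‖ := (Real.norm_eq_abs _).symm
        _ ≤ ‖f‖ * ‖u‖ := f.le_opNorm u
        _ = 1 := by rw [hf, hu, mul_one]
    have h2 : (f u) ^ 2 ≤ 1 := by
      rw [← sq_abs]
      exact pow_le_one₀ (abs_nonneg _) h1
    simp only [hG, hf]
    nlinarith
  -- minimum of max (G f) (-(H f)) on the sphere is positive
  obtain ⟨f₁, hf₁mem, hmin⟩ :=
    (isCompact_sphere (0 : X →L[ℝ] ℝ) 1).exists_isMinOn ⟨f₀, hf₀mem⟩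
      ((hGc.max hHc.neg).continuousOn)
  set c : ℝ := max (G f₁) (-(H f₁)) with hc
  have hf₁n : ‖f₁‖ = 1 := mem_sphere_zero_iff_norm.1 hf₁mem
  have hcpos : 0 < c := by
    by_contra hcle
    push_neg at hcle
    have hG1 : G f₁ ≤ 0 := le_trans (le_max_left _ _) hcle
    have hH1 : -(H f₁) ≤ 0 := le_trans (le_max_right _ _) hcle
    have hfu2 : (f₁ u) ^ 2 = 1 := by
      have h2 : (f₁ u) ^ 2 ≤ 1 := by
        have := hGnn f₁ hf₁n
        simp only [hG, hf₁n] at this ⊢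
        nlinarith
      have h3 : 1 ≤ (f₁ u) ^ 2 := by
        simp only [hG, hf₁n] at hG1
        nlinarith
      linarith
    have hcases : f₁ u = 1 ∨ f₁ u = -1 := by
      rcases mul_eq_zero.mp (by nlinarith : (f₁ u - 1) * (f₁ u + 1) = 0) with h | h
      · left; linarith
      · right; linarith
    have hf₁eq : f₁ = f₀ ∨ f₁ = -f₀ := by
      rcases hcases with h | h
      · exact Or.inl (huniq f₁ hf₁n h)
      · right
        have h1 : ‖-f₁‖ = 1 := by rwa [norm_neg]
        have h2 : (-f₁) u = 1 := by
          simp only [ContinuousLinearMap.neg_apply]; linarith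
        have := huniq (-f₁) h1 h2
        rw [← this]; rw [neg_neg]
    have hHneg : H f₁ = -s := by
      rcases hf₁eq with h | h <;> subst h <;>
        simp only [hH, ContinuousLinearMap.neg_apply, hv, hf₀u] <;> ring
    rw [hHneg] at hH1
    linarith
  -- maximum of H on the sphere
  obtain ⟨f₂, _, hmaxH⟩ :=
    (isCompact_sphere (0 : X →L[ℝ] ℝ) 1).exists_isMaxOn ⟨f₀, hf₀mem⟩ hHc.continuousOn
  set M : ℝ := max (H f₂) 1 with hM
  have hMpos : 0 < M := lt_of_lt_of_le one_pos (le_max_right _ _)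
  set b : ℝ := Real.sqrt (min (c / M) (1 / (s + 1))) with hb
  have hminpos : 0 < min (c / M) (1 / (s + 1)) := by
    refine lt_min (div_pos hcpos hMpos) (by positivity)
  have hbpos : 0 < b := Real.sqrt_pos.2 hminpos
  have hb2 : b ^ 2 = min (c / M) (1 / (s + 1)) := Real.sq_sqrt hminpos.le
  have hb2cM : b ^ 2 ≤ c / M := hb2 ▸ min_le_left _ _
  have hb2s : b ^ 2 * s < 1 := by
    have h1 : b ^ 2 ≤ 1 / (s + 1) := hb2 ▸ min_le_right _ _
    have h2 : b ^ 2 * s ≤ s / (s + 1) := by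
      rw [div_eq_mul_inv, mul_comm s]
      refine mul_le_mul_of_nonneg_right ?_ hspos.le
      rwa [one_div] at h1
    have h3 : s / (s + 1) < 1 := by
      rw [div_lt_one (by linarith)]; linarith
    linarith
  -- key inequality on the sphere
  have hkey_sphere : ∀ f : X →L[ℝ] ℝ, ‖f‖ = 1 → b ^ 2 * H f ≤ G f := by
    intro f hf
    rcases le_or_gt (H f) 0 with hHf | hHf
    · calc b ^ 2 * H f ≤ 0 := mul_nonpos_of_nonneg_of_nonpos (sq_nonneg b) hHf
        _ ≤ G f := hGnn f hf
    · have hGf : c ≤ G f := by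
        have hφ : c ≤ max (G f) (-(H f)) := hmin (mem_sphere_zero_iff_norm.2 hf)
        rcases le_max_iff.mp hφ with h | h
        · exact h
        · exfalso; linarith
      have hHfM : H f ≤ M := le_trans (hmaxH (mem_sphere_zero_iff_norm.2 hf)) (le_max_left _ _)
      calc b ^ 2 * H f ≤ (c / M) * H f := mul_le_mul_of_nonneg_right hb2cM hHf.le
        _ ≤ (c / M) * M := mul_le_mul_of_nonneg_left hHfM (div_nonneg hcpos.le hMpos.le)
        _ = c := div_mul_cancel₀ c hMpos.ne'
        _ ≤ G f := hGf
  -- key inequality for all functionals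
  have hkey : ∀ f : X →L[ℝ] ℝ, b ^ 2 * H f ≤ G f := by
    intro f
    rcases eq_or_ne f 0 with rfl | hf
    · simp [hG, hH]
    · have hfn : (0 : ℝ) < ‖f‖ := norm_pos_iff.2 hf
      set g : X →L[ℝ] ℝ := ‖f‖⁻¹ • f with hg
      have hgn : ‖g‖ = 1 := norm_smul_inv_norm (𝕜 := ℝ) hf
      have hgu : g u = ‖f‖⁻¹ * f u := rfl
      have hgv : g v = ‖f‖⁻¹ * f v := rfl
      have hsph := hkey_sphere g hgn
      have hGg : ‖f‖ ^ 2 * G g = G f := by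
        simp only [hG, hgn, hgu]
        field_simp
        try ring
      have hHg : ‖f‖ ^ 2 * H g = H f := by
        simp only [hH, hgu, hgv]
        field_simp
        try ring
      have := mul_le_mul_of_nonneg_left hsph (by positivity : (0:ℝ) ≤ ‖f‖ ^ 2)
      calc b ^ 2 * H f = ‖f‖ ^ 2 * (b ^ 2 * H g) := by rw [← hHg]; ring
        _ ≤ ‖f‖ ^ 2 * G g := this
        _ = G f := hGg
  -- construct the improving configuration
  set α : ℝ := Real.sqrt (1 - b ^ 2 * s) with hα
  have hα2 : α ^ 2 = 1 - b ^ 2 * s := Real.sq_sqrt (by linarith)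
  set x : Fin 2 → X := ![α • u, b • v] with hx
  have hconstraint : ∀ f : X →L[ℝ] ℝ, ∑ i, (f (x i)) ^ 2 ≤ ‖f‖ ^ 2 := by
    intro f
    have hsum : ∑ i, (f (x i)) ^ 2 = α ^ 2 * (f u) ^ 2 + b ^ 2 * (f v) ^ 2 := by
      rw [hx]
      rw [Fin.sum_univ_two]
      simp [map_smul, mul_pow]
    rw [hsum, hα2]
    have hkf := hkey f
    simp only [hG, hH] at hkf
    have hexp : (1 - b ^ 2 * s) * (f u) ^ 2 + b ^ 2 * (f v) ^ 2
        = (f u) ^ 2 + b ^ 2 * ((f v) ^ 2 - s * (f u) ^ 2) := by ring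
    rw [hexp]
    linarith [hkf]
  have hmem : Real.sqrt (∑ i, ‖S (x i)‖ ^ 2) ∈ p2Set S := ⟨2, x, hconstraint, rfl⟩
  have hle : Real.sqrt (∑ i, ‖S (x i)‖ ^ 2) ≤ a := le_csSup (p2Set_bddAbove S) hmem
  have hval : ∑ i, ‖S (x i)‖ ^ 2 = a ^ 2 + b ^ 2 * (‖S v‖ ^ 2 / 2) := by
    have ha0 : a ≠ 0 := hpos.ne'
    have h0 : ∑ i, ‖S (x i)‖ ^ 2 = ‖S (α • u)‖ ^ 2 + ‖S (b • v)‖ ^ 2 := by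
      rw [hx, Fin.sum_univ_two]
      simp
    have h1 : ‖S (α • u)‖ ^ 2 = α ^ 2 * ‖S u‖ ^ 2 := by
      rw [map_smul, norm_smul, Real.norm_eq_abs, mul_pow, sq_abs]
    have h2 : ‖S (b • v)‖ ^ 2 = b ^ 2 * ‖S v‖ ^ 2 := by
      rw [map_smul, norm_smul, Real.norm_eq_abs, mul_pow, sq_abs]
    have hsa : s * a ^ 2 = ‖S v‖ ^ 2 / 2 := by
      rw [hs]
      field_simp
    rw [h0, h1, h2, hα2, hSu]
    linear_combination (-(b ^ 2)) * hsa
  have hgt : a < Real.sqrt (∑ i, ‖S (x i)‖ ^ 2) := by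
    rw [hval]
    have h1 : a ^ 2 < a ^ 2 + b ^ 2 * (‖S v‖ ^ 2 / 2) := by
      have hprod : 0 < b ^ 2 * (‖S v‖ ^ 2 / 2) :=
        mul_pos (pow_pos hbpos 2) (div_pos (pow_pos hSvn 2) two_pos)
      linarith
    calc a = Real.sqrt (a ^ 2) := (Real.sqrt_sq hpos.le).symm
      _ < _ := Real.sqrt_lt_sqrt (sq_nonneg a) h1
  linarith

end Pi2Aux


section MainTheorem

open Pi2Aux

/-- If `X` is a 2-dimensional real Banach space that is strictly convex and smooth, then
`Π₂(X,X)` is strictly convex. -/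
theorem pi2_strictly_convex_of_two_dim_strictly_convex_smooth
    {X : Type*} [NormedAddCommGroup X] [NormedSpace ℝ X]
    (hdim : Module.finrank ℝ X = 2) [StrictConvexSpace ℝ X]
    (hsmooth : ∀ x : X, x ≠ 0 → ∃! f : X →L[ℝ] ℝ, ‖f‖ = 1 ∧ f x = ‖x‖) :
    ∀ S T : X →L[ℝ] X, pi2 S = pi2 T → pi2 S = pi2 (S + T) / 2 → S = T := by
  intro S T hST h2
  haveI : FiniteDimensional ℝ X := FiniteDimensional.of_finrank_eq_succ (n := 1) (by rw [hdim])
  set a : ℝ := pi2 S with ha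
  have haT : pi2 T = a := hST.symm
  have hR2a : pi2 (S + T) = 2 * a := by rw [ha]; linarith [h2]
  rcases (pi2_nonneg S).eq_or_lt with h0 | h0
  · -- degenerate case : pi2 S = 0
    have hzero : ∀ W : X →L[ℝ] X, pi2 W = 0 → W = 0 := by
      intro W hW
      ext y
      rcases eq_or_ne y 0 with rfl | hy
      · simp
      · have h1 : ‖W (‖y‖⁻¹ • y)‖ ≤ pi2 W :=
          norm_apply_le_pi2 W (le_of_eq (norm_smul_inv_norm (𝕜 := ℝ) hy))
        rw [hW] at h1
        have h2' : W (‖y‖⁻¹ • y) = 0 := norm_le_zero_iff.1 h1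
        rw [map_smul, smul_eq_zero] at h2'
        rcases h2' with h | h
        · exact absurd h (inv_ne_zero (norm_ne_zero_iff.2 hy))
        · simp [h]
    rw [hzero S h0.symm, hzero T (by rw [haT, ha]; exact h0.symm)]
  · -- main case : a > 0
    set R : X →L[ℝ] X := S + T with hRdef
    obtain ⟨x, hxA, hxval⟩ := pi2_attained R
    have hxval' : Real.sqrt (∑ i, ‖R (x i)‖ ^ 2) = 2 * a := by rw [hxval, hR2a]
    have hRsumnn : (0:ℝ) ≤ ∑ i, ‖R (x i)‖ ^ 2 := Finset.sum_nonneg fun i _ => sq_nonneg _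
    have hsum4 : ∑ i, ‖R (x i)‖ ^ 2 = (2 * a) ^ 2 := by
      calc ∑ i, ‖R (x i)‖ ^ 2 = (Real.sqrt (∑ i, ‖R (x i)‖ ^ 2)) ^ 2 :=
            (Real.sq_sqrt hRsumnn).symm
        _ = (2 * a) ^ 2 := by rw [hxval']
    set p : Fin (NN X) → ℝ := fun i => ‖S (x i)‖ with hp
    set q : Fin (NN X) → ℝ := fun i => ‖T (x i)‖ with hq
    have hPnn : (0:ℝ) ≤ ∑ i, p i ^ 2 := Finset.sum_nonneg fun i _ => sq_nonneg _
    have hQnn : (0:ℝ) ≤ ∑ i, q i ^ 2 := Finset.sum_nonneg fun i _ => sq_nonneg _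
    set sP : ℝ := Real.sqrt (∑ i, p i ^ 2) with hsPdef
    set sQ : ℝ := Real.sqrt (∑ i, q i ^ 2) with hsQdef
    have hsP : sP ≤ a := le_csSup (p2Set_bddAbove S) ⟨NN X, x, hxA, rfl⟩
    have hsQ : sQ ≤ a := by
      have : sQ ≤ pi2 T := le_csSup (p2Set_bddAbove T) ⟨NN X, x, hxA, rfl⟩
      rwa [haT] at this
    have hsPnn : 0 ≤ sP := Real.sqrt_nonneg _
    have hsQnn : 0 ≤ sQ := Real.sqrt_nonneg _
    have hsP2 : sP ^ 2 = ∑ i, p i ^ 2 := Real.sq_sqrt hPnn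
    have hsQ2 : sQ ^ 2 = ∑ i, q i ^ 2 := Real.sq_sqrt hQnn
    have htermwise : ∀ i ∈ Finset.univ (α := Fin (NN X)),
        ‖R (x i)‖ ^ 2 ≤ (p i + q i) ^ 2 := by
      intro i _
      have h1 : ‖R (x i)‖ ≤ p i + q i := by
        rw [hRdef]
        exact norm_add_le _ _
      exact pow_le_pow_left₀ (norm_nonneg _) h1 2
    have hchain : (2 * a) ^ 2 ≤ ∑ i, (p i + q i) ^ 2 :=
      hsum4 ▸ Finset.sum_le_sum htermwise
    have hexpand : ∑ i, (p i + q i) ^ 2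
        = (∑ i, p i ^ 2) + (∑ i, q i ^ 2) + 2 * ∑ i, p i * q i := by
      have h1 : ∑ i, (p i + q i) ^ 2
          = ∑ i, (p i ^ 2 + q i ^ 2 + 2 * (p i * q i)) :=
        Finset.sum_congr rfl fun i _ => by ring
      rw [h1, Finset.sum_add_distrib, Finset.sum_add_distrib, Finset.mul_sum]
    have hCS : ∑ i, p i * q i ≤ sP * sQ :=
      Real.sum_mul_le_sqrt_mul_sqrt Finset.univ p q
    have hup : ∑ i, (p i + q i) ^ 2 ≤ (sP + sQ) ^ 2 := by
      rw [hexpand]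
      nlinarith [hCS, hsP2, hsQ2]
    have hge : 2 * a ≤ sP + sQ := by
      nlinarith [hchain, hup, hsPnn, hsQnn, h0]
    have hsPa : sP = a := by linarith
    have hsQa : sQ = a := by linarith
    have hP : ∑ i, p i ^ 2 = a ^ 2 := by rw [← hsP2, hsPa]
    have hQ : ∑ i, q i ^ 2 = a ^ 2 := by rw [← hsQ2, hsQa]
    have hmid : ∑ i, (p i + q i) ^ 2 = (2 * a) ^ 2 := by
      refine le_antisymm ?_ hchain
      calc ∑ i, (p i + q i) ^ 2 ≤ (sP + sQ) ^ 2 := hup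
        _ = (2 * a) ^ 2 := by rw [hsPa, hsQa]; ring
    have hzero : ∑ i, (p i - q i) ^ 2 = 0 := by
      have h1 : ∑ i, (p i - q i) ^ 2
          = ∑ i, (2 * p i ^ 2 + 2 * q i ^ 2 - (p i + q i) ^ 2) :=
        Finset.sum_congr rfl fun i _ => by ring
      rw [h1, Finset.sum_sub_distrib, Finset.sum_add_distrib, ← Finset.mul_sum,
        ← Finset.mul_sum, hP, hQ, hmid]
      ring
    have hpq : ∀ i, p i = q i := by
      intro i
      have h1 := (Finset.sum_eq_zero_iff_of_nonneg
        (fun i _ => sq_nonneg (p i - q i))).1 hzero i (Finset.mem_univ i)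
      have h2 : p i - q i = 0 := by
        have := sq_eq_zero_iff.1 h1
        exact this
      linarith
    have htermeq : ∀ i, ‖R (x i)‖ ^ 2 = (p i + q i) ^ 2 := by
      have := (Finset.sum_eq_sum_iff_of_le htermwise).1 (by rw [hsum4, hmid])
      intro i
      exact this i (Finset.mem_univ i)
    have hSTeq : ∀ i, S (x i) = T (x i) := by
      intro i
      have hpnn : 0 ≤ p i := norm_nonneg _
      have hqnn : 0 ≤ q i := norm_nonneg _
      have h2 : ‖R (x i)‖ = p i + q i := by
        have h3 : ‖R (x i)‖ = Real.sqrt (‖R (x i)‖ ^ 2) :=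
          (Real.sqrt_sq (norm_nonneg _)).symm
        rw [h3, htermeq i, Real.sqrt_sq (by positivity)]
      have hpq' : ‖S (x i)‖ = ‖T (x i)‖ := hpq i
      have h1 : ‖S (x i) + T (x i)‖ = ‖S (x i)‖ + ‖T (x i)‖ := by
        have h4 : S (x i) + T (x i) = R (x i) := by rw [hRdef]; rfl
        rw [h4, h2]
      exact eq_of_norm_eq_of_norm_add_eq hpq' h1
    have hxex : ∃ i, x i ≠ 0 := by
      by_contra h
      push_neg at h
      have h1 : (2 * a) ^ 2 = 0 := by
        rw [← hsum4]
        refine Finset.sum_eq_zero fun i _ => ?_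
        rw [h i]
        simp
      nlinarith
    obtain ⟨i₀, hi₀⟩ := hxex
    by_cases hspan : ∀ j, x j ∈ Submodule.span ℝ {x i₀}
    · -- all extremal vectors on a line
      set u : X := ‖x i₀‖⁻¹ • x i₀ with hudef
      have hu : ‖u‖ = 1 := norm_smul_inv_norm (𝕜 := ℝ) hi₀
      have hune : u ≠ 0 := by
        intro h
        rw [h, norm_zero] at hu
        exact one_ne_zero hu.symm
      obtain ⟨f₀, hf₀pair, huniq0⟩ := hsmooth u hune
      have hf₀n : ‖f₀‖ = 1 := hf₀pair.1
      have hf₀u : f₀ u = 1 := by rw [hf₀pair.2, hu]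
      have huniq' : ∀ f : X →L[ℝ] ℝ, ‖f‖ = 1 → f u = 1 → f = f₀ := by
        intro f h1 h2
        exact huniq0 f ⟨h1, by rw [h2, hu]⟩
      have hcoef : ∀ j, ∃ t : ℝ, x j = t • u := by
        intro j
        obtain ⟨cj, hcj⟩ := Submodule.mem_span_singleton.1 (hspan j)
        refine ⟨cj * ‖x i₀‖, ?_⟩
        rw [hudef, smul_smul, mul_assoc,
          mul_inv_cancel₀ (norm_ne_zero_iff.2 hi₀), mul_one, hcj]
      choose t ht using hcoef
      have hf₀x : ∀ j, f₀ (x j) = t j := by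
        intro j
        rw [ht j, map_smul, smul_eq_mul, hf₀u, mul_one]
      have hT2 : ∑ j, (t j) ^ 2 ≤ 1 := by
        have h1 := hxA f₀
        rw [hf₀n] at h1
        simp only [hf₀x] at h1
        simpa using h1
      have hRt : ∀ j, ‖R (x j)‖ ^ 2 = (t j) ^ 2 * ‖R u‖ ^ 2 := by
        intro j
        rw [ht j, map_smul, norm_smul, Real.norm_eq_abs, mul_pow, sq_abs]
      have h4a : (2 * a) ^ 2 ≤ ‖R u‖ ^ 2 := by
        calc (2 * a) ^ 2 = ∑ j, ‖R (x j)‖ ^ 2 := hsum4.symm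
          _ = (∑ j, (t j) ^ 2) * ‖R u‖ ^ 2 := by
              rw [Finset.sum_mul]
              exact Finset.sum_congr rfl fun j _ => hRt j
          _ ≤ 1 * ‖R u‖ ^ 2 := mul_le_mul_of_nonneg_right hT2 (sq_nonneg _)
          _ = ‖R u‖ ^ 2 := one_mul _
      have hRu2a : 2 * a ≤ ‖R u‖ := by
        have h1 : 2 * a = Real.sqrt ((2 * a) ^ 2) := (Real.sqrt_sq (by positivity)).symm
        rw [h1]
        calc Real.sqrt ((2 * a) ^ 2) ≤ Real.sqrt (‖R u‖ ^ 2) := Real.sqrt_le_sqrt h4a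
          _ = ‖R u‖ := Real.sqrt_sq (norm_nonneg _)
      have hSu_le : ‖S u‖ ≤ a := norm_apply_le_pi2 S hu.le
      have hTu_le : ‖T u‖ ≤ a := by
        have := norm_apply_le_pi2 T hu.le
        rwa [haT] at this
      have hRu_le : ‖R u‖ ≤ ‖S u‖ + ‖T u‖ := by
        rw [hRdef]
        exact norm_add_le _ _
      have hSua : ‖S u‖ = a := by linarith
      have hTua : ‖T u‖ = a := by linarith
      have hRuval : ‖S u + T u‖ = ‖S u‖ + ‖T u‖ := by
        have h1 : ‖S u + T u‖ = ‖R u‖ := by rw [hRdef]; rfl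
        rw [h1, hSua, hTua]
        linarith
      have hSuTu : S u = T u :=
        eq_of_norm_eq_of_norm_add_eq (hSua.trans hTua.symm) hRuval
      have hvex : ∃ v : X, v ≠ 0 ∧ f₀ v = 0 := by
        by_contra h
        push_neg at h
        have hinj : Function.Injective (f₀ : X →ₗ[ℝ] ℝ) := by
          intro y z hyz
          by_contra hne
          have h1 : y - z ≠ 0 := sub_ne_zero.2 hne
          have h2 : f₀ (y - z) = 0 := by
            simp only [ContinuousLinearMap.coe_coe] at hyz
            rw [map_sub, hyz, sub_self]
          exact h (y - z) h1 h2
        have hle := LinearMap.finrank_le_finrank_of_injective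
          (f := (f₀ : X →ₗ[ℝ] ℝ)) hinj
        rw [hdim, Module.finrank_self] at hle
        omega
      obtain ⟨v, hvne, hfv⟩ := hvex
      have hSv : S v = 0 :=
        key_rank_one S hu hf₀n hf₀u huniq' (by rw [hSua]) (ha ▸ h0) hfv
      have hTv : T v = 0 :=
        key_rank_one T hu hf₀n hf₀u huniq' (by rw [hTua, haT]) (haT.symm ▸ (ha ▸ h0)) hfv
      have hker : ∀ w : X, f₀ w = 0 → (S w = 0 ∧ T w = 0) := by
        intro w hfw
        rcases eq_or_ne w 0 with rfl | hwne
        · simp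
        · have hwspan : w ∈ Submodule.span ℝ ({v} : Set X) := by
            by_contra hnot
            have li : LinearIndependent ℝ ![w, v] := by
              rw [linearIndependent_fin2]
              constructor
              · simpa using hvne
              · intro cc hcc
                exact hnot (Submodule.mem_span_singleton.2 ⟨cc, by simpa using hcc⟩)
            have hcard : Fintype.card (Fin 2) = Module.finrank ℝ X := by
              simp [hdim]
            set bb := basisOfLinearIndependentOfCardEqFinrank li hcard with hbb
            have hf₀zero : (f₀ : X →ₗ[ℝ] ℝ) = 0 := by
              refine Module.Basis.ext bb fun i => ?_
              have hcoe : ⇑bb = ![w, v] := coe_basisOfLinearIndependentOfCardEqFinrank li hcard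
              fin_cases i <;> rw [hcoe] <;> simp [hfw, hfv]
            have : f₀ u = 0 := by
              have := LinearMap.congr_fun hf₀zero u
              simpa using this
            rw [hf₀u] at this
            exact one_ne_zero this
          obtain ⟨cw, hcw⟩ := Submodule.mem_span_singleton.1 hwspan
          constructor
          · rw [← hcw, map_smul, hSv, smul_zero]
          · rw [← hcw, map_smul, hTv, smul_zero]
      ext y
      have hfw : f₀ (y - f₀ y • u) = 0 := by
        rw [map_sub, map_smul, smul_eq_mul, hf₀u, mul_one, sub_self]
      obtain ⟨hSw, hTw⟩ := hker _ hfw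
      have hy : y = f₀ y • u + (y - f₀ y • u) := by abel
      have hSy : S y = f₀ y • S u := by
        conv_lhs => rw [hy]
        rw [map_add, hSw, add_zero, map_smul]
      have hTy : T y = f₀ y • T u := by
        conv_lhs => rw [hy]
        rw [map_add, hTw, add_zero, map_smul]
      rw [hSy, hTy, hSuTu]
    · -- spanning case
      push_neg at hspan
      obtain ⟨j, hj⟩ := hspan
      have li : LinearIndependent ℝ ![x j, x i₀] := by
        rw [linearIndependent_fin2]
        constructor
        · simpa using hi₀
        · intro cc hcc
          refine hj (Submodule.mem_span_singleton.2 ⟨cc, by simpa using hcc⟩)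
      have hcard : Fintype.card (Fin 2) = Module.finrank ℝ X := by simp [hdim]
      set bb := basisOfLinearIndependentOfCardEqFinrank li hcard with hbb
      have hlin : (S : X →ₗ[ℝ] X) = (T : X →ₗ[ℝ] X) := by
        refine Module.Basis.ext bb fun i => ?_
        have hcoe : ⇑bb = ![x j, x i₀] := coe_basisOfLinearIndependentOfCardEqFinrank li hcard
        fin_cases i <;> rw [hcoe] <;> simp [hSTeq j, hSTeq i₀]
      exact ContinuousLinearMap.coe_injective hlin

end MainTheorem
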